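/- arXiv:1712.04007 — 3 statements merged into one kernel-verified Lean document; each statement's English description precedes it below -/
import Mathlib

section
/- Let A ∈ ℝ[t]^{n×n} be a matrix polynomial of degree at most d. Then A is singular (i.e., det A is the zero polynomial) if and only if there exists a nonzero vector b ∈ ℝ[t]^{n×1} whose entries all have degree at most nd such that A·b = 0. -/
/-!
If `det A = 0`, pick a nonvanishing `r × r` minor of `A`, on rows `f` and columns `g`, with `r`
maximal; then `r < n` and there is a column `j` outside `g`. The vector of signed `r × r` minors of
the `r × (r + 1)` block on rows `f` and columns `j, g` (Cramer's rule) is killed by `A`: its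
product with row `i` is the Laplace expansion of the `(r + 1)`-minor on rows `i, f`, which
vanishes by maximality. Its entry at `j` is the chosen nonzero minor, and every entry is an `r × r`
determinant of polynomials of degree `≤ d`, hence of degree `≤ r d ≤ n d`. The converse holds
over any domain: a nonzero kernel vector forces `det A = 0`.
-/

open Polynomial Matrix

namespace Matrix

variable {R : Type*} [CommRing R] {l m n : Type*}

def minorCofactorVec [DecidableEq n] (A : Matrix m n R) {r : ℕ} (f : Fin r → m)
    (g : Fin (r + 1) → n) : n → R :=
  ∑ k, Pi.single (g k) ((-1) ^ (k : ℕ) * (A.submatrix f (g ∘ k.succAbove)).det)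

theorem mulVec_minorCofactorVec [Fintype n] [DecidableEq n] (A : Matrix m n R) {r : ℕ}
    (f : Fin r → m) (g : Fin (r + 1) → n) (i : m) :
    (A *ᵥ minorCofactorVec A f g) i = (A.submatrix (Fin.cons i f) g).det := by
  rw [det_succ_row_zero, minorCofactorVec, mulVec_sum, Finset.sum_apply]
  refine Finset.sum_congr rfl fun k _ => ?_
  simp only [mulVec, dotProduct_single, submatrix_apply, Fin.cons_zero, submatrix_submatrix,
    Fin.cons_comp_succ]
  ring

theorem minorCofactorVec_cons_self [DecidableEq n] (A : Matrix m n R) {r : ℕ} (f : Fin r → m)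
    {j : n} {g : Fin r → n} (hj : j ∉ Set.range g) :
    minorCofactorVec A f (Fin.cons j g) j = (A.submatrix f g).det := by
  rw [minorCofactorVec, Finset.sum_apply, Fin.sum_univ_succ, Finset.sum_eq_zero]
  · simp
  · intro k _
    simp only [Fin.cons_succ]
    exact Pi.single_eq_of_ne (fun h => hj ⟨k, h.symm⟩) _

theorem injective_of_det_submatrix_ne_zero [Fintype l] [DecidableEq l]
    {A : Matrix m n R} {f : l → m} {g : l → n} (h : (A.submatrix f g).det ≠ 0) :
    f.Injective ∧ g.Injective := by
  constructor <;> intro a b hab <;> by_contra hne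
  · exact h (det_zero_of_row_eq hne (by ext; simp [hab]))
  · exact h (det_zero_of_column_eq hne (by simp [hab]))

theorem det_submatrix_eq_zero_of_bijective [Fintype n] [DecidableEq n] [Fintype l]
    [DecidableEq l] {A : Matrix n n R} (hA : A.det = 0) {f g : l → n} (hf : f.Bijective)
    (hg : g.Bijective) :
    (A.submatrix f g).det = 0 := by
  set e₁ := Equiv.ofBijective f hf
  set e₂ := Equiv.ofBijective g hg
  have : A.submatrix f g = (A.submatrix (e₂.symm.trans e₁) id).submatrix e₂ e₂ := by
    ext i j; simp [e₁, e₂]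
  rw [this, det_submatrix_equiv_self, det_permute, hA, mul_zero]

theorem exists_maximal_nonzero_minor [Fintype n] [DecidableEq n] [Nontrivial R]
    {A : Matrix n n R} (hA : A.det = 0) :
    ∃ r < Fintype.card n, ∃ f g : Fin r → n, (A.submatrix f g).det ≠ 0 ∧
      ∀ f' g' : Fin (r + 1) → n, (A.submatrix f' g').det = 0 := by
  classical
  let P r := ∃ f g : Fin r → n, (A.submatrix f g).det ≠ 0
  have hP₀ : P 0 := ⟨Fin.elim0, Fin.elim0, by simp⟩
  have hP_card : ¬ P (Fintype.card n) := by
    rintro ⟨f, g, h⟩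
    have bijective_of_injective {e : Fin (Fintype.card n) → n} (he : e.Injective) :=
      (Fintype.bijective_iff_injective_and_card e).mpr ⟨he, by simp⟩
    obtain ⟨hf, hg⟩ := injective_of_det_submatrix_ne_zero h
    exact h (det_submatrix_eq_zero_of_bijective hA (bijective_of_injective hf)
      (bijective_of_injective hg))
  have hr : Nat.findGreatest P (Fintype.card n) < Fintype.card n :=
    (Nat.findGreatest_le _).lt_of_ne fun h =>
      hP_card (h ▸ Nat.findGreatest_spec (P := P) (Nat.zero_le _) hP₀)
  obtain ⟨f, g, h⟩ := Nat.findGreatest_spec (Nat.zero_le _) hP₀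
  refine ⟨_, hr, f, g, h, fun f' g' => ?_⟩
  by_contra h'
  exact Nat.findGreatest_is_greatest (Nat.lt_succ_self _) hr ⟨f', g', h'⟩

theorem exists_minorCofactorVec_ne_zero_of_det_eq_zero [Fintype n] [DecidableEq n]
    [Nontrivial R] {A : Matrix n n R} (hA : A.det = 0) :
    ∃ r < Fintype.card n, ∃ (f : Fin r → n) (g : Fin (r + 1) → n),
      minorCofactorVec A f g ≠ 0 ∧ A *ᵥ minorCofactorVec A f g = 0 := by
  obtain ⟨r, hr, f, g, hfg, hmax⟩ := exists_maximal_nonzero_minor hA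
  obtain ⟨j, hj⟩ : ∃ j, j ∉ Set.range g := by
    by_contra! hsurj
    have := Fintype.card_le_of_surjective g fun j => hsurj j
    simp only [Fintype.card_fin] at this
    omega
  refine ⟨r, hr, f, Fin.cons j g, fun h => hfg ?_, funext fun i => ?_⟩
  · rw [← minorCofactorVec_cons_self A f hj, h, Pi.zero_apply]
  · rw [mulVec_minorCofactorVec, hmax, Pi.zero_apply]

theorem natDegree_det_le [Fintype n] [DecidableEq n] {A : Matrix n n R[X]} {d : ℕ}
    (hA : ∀ i j, (A i j).natDegree ≤ d) : A.det.natDegree ≤ Fintype.card n * d := by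
  rw [det_apply]
  refine natDegree_sum_le_of_forall_le _ _ fun σ _ => ?_
  calc (Equiv.Perm.sign σ • ∏ i, A (σ i) i).natDegree
      ≤ (∏ i, A (σ i) i).natDegree := by rw [Units.smul_def]; exact natDegree_smul_le _ _
    _ ≤ ∑ i, (A (σ i) i).natDegree := natDegree_prod_le _ _
    _ ≤ Fintype.card n * d :=
        (Finset.sum_le_card_nsmul _ _ d fun i _ => hA _ _).trans_eq (by simp [Finset.card_univ])

theorem natDegree_minorCofactorVec_le [DecidableEq n] {A : Matrix m n R[X]} {d : ℕ}
    (hA : ∀ i j, (A i j).natDegree ≤ d) {r : ℕ} (f : Fin r → m) (g : Fin (r + 1) → n)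
    (j : n) :
    (minorCofactorVec A f g j).natDegree ≤ r * d := by
  rw [minorCofactorVec, Finset.sum_apply]
  refine natDegree_sum_le_of_forall_le _ _ fun k _ => ?_
  rw [Pi.single_apply]
  split_ifs
  · calc _ ≤ (A.submatrix f (g ∘ k.succAbove)).det.natDegree := by
          rcases neg_one_pow_eq_or R[X] k with h | h <;> simp [h]
      _ ≤ Fintype.card (Fin r) * d := natDegree_det_le fun _ _ => hA _ _
      _ = r * d := by rw [Fintype.card_fin]
  · simp

end Matrix

/-- A matrix polynomial `A ∈ ℝ[t]^{n×n}` of degree at most `d` is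
singular (its determinant is the zero polynomial) if and only if there is a nonzero
vector `b ∈ ℝ[t]^{n×1}` whose entries all have degree at most `n·d` with `A·b = 0`. -/
theorem nearest_singular_degree_bound
    (n d : ℕ) (A : Matrix (Fin n) (Fin n) (Polynomial ℝ))
    (hA : ∀ i j, (A i j).natDegree ≤ d) :
    A.det = 0 ↔
      ∃ b : Fin n → Polynomial ℝ,
        b ≠ 0 ∧ (∀ i, (b i).natDegree ≤ n * d) ∧ A.mulVec b = 0 := by
  refine ⟨fun hdet => ?_, fun ⟨b, hb, _, hAb⟩ => exists_mulVec_eq_zero_iff.mp ⟨b, hb, hAb⟩⟩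
  obtain ⟨r, hr, f, g, hne, hzero⟩ := exists_minorCofactorVec_ne_zero_of_det_eq_zero hdet
  refine ⟨_, hne, fun j => ?_, hzero⟩
  calc _ ≤ r * d := natDegree_minorCofactorVec_le hA f g j
    _ ≤ n * d := by gcongr; simpa using hr.le
end

section
/- Let A ∈ ℝ[t]^{n×n} be a matrix polynomial of degree at most d, set μ = nd+1, and let Â ∈ ℝ^{n(μ+d)×nμ} be its ℝ-embedding. Then A is singular (det A is the zero polynomial) if and only if Â does not have full column rank, i.e., rank(Â) < nμ. -/
open Polynomial

/-- The Toeplitz convolution matrix `φ(a) ∈ ℝ^{(μ+d)×μ}` of a polynomial `a`. -/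
noncomputable def phi (d μ : ℕ) (a : Polynomial ℝ) : Matrix (Fin (μ + d)) (Fin μ) ℝ :=
  fun i j => if (j : ℕ) ≤ (i : ℕ) then a.coeff ((i : ℕ) - (j : ℕ)) else 0

/-- The ℝ-embedding `Â ∈ ℝ^{n(μ+d) × nμ}` (with `μ = nd+1`) of a matrix polynomial
`A ∈ ℝ[t]^{n×n}` of degree at most `d`: the `(i,j)` block is `φ(A_{ij})`. -/
noncomputable def embedMat (n d : ℕ) (A : Matrix (Fin n) (Fin n) (Polynomial ℝ)) :
    Matrix (Fin n × Fin (n * d + 1 + d)) (Fin n × Fin (n * d + 1)) ℝ :=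
  fun p q => phi d (n * d + 1) (A p.1 q.1) p.2 q.2

/-!
Identify `x ∈ ℝ^{nμ}` with the polynomial vector `b` whose entries have coefficient vectors the
blocks of `x`, so that `deg b < μ`. Then `Â x` is the coefficient vector of `A b`, and nothing is
lost since `deg (A b) < μ + d`; hence `ker Â` corresponds to the kernel vectors of `A` of degree
`< μ`, and a nonzero one forces `det A = 0`.

Conversely, if `det A = 0`, pick `w ≠ 0` with `wᵀ A = 0` and `w i₀ ≠ 0`. Pairing with `w` shows
that `(A b) i₀ = 0` as soon as all other entries of `A b` vanish, so `Â` has the same kernel as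
the matrix obtained by deleting its `i₀`-th block row. Thus `rank Â ≤ (n - 1)(μ + d) < nμ`, the
last step being `(n - 1) d < μ`.
-/

open Matrix

namespace Matrix

variable {K : Type*} [Field K] {m m' n : Type*} [Fintype n]

theorem rank_eq_rank_of_mulVec_eq_zero_iff {A : Matrix m n K} {B : Matrix m' n K}
    (h : ∀ x, A *ᵥ x = 0 ↔ B *ᵥ x = 0) : A.rank = B.rank := by
  have hker : LinearMap.ker A.mulVecLin = LinearMap.ker B.mulVecLin := by
    ext x
    exact h x
  have hA := LinearMap.finrank_range_add_finrank_ker A.mulVecLin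
  have hB := LinearMap.finrank_range_add_finrank_ker B.mulVecLin
  rw [hker] at hA
  exact Nat.add_right_cancel (hA.trans hB.symm)

theorem exists_mulVec_eq_zero_of_rank_lt {A : Matrix m n K} (h : A.rank < Fintype.card n) :
    ∃ x ≠ 0, A *ᵥ x = 0 := by
  by_contra! hx
  have hinj : Function.Injective A.mulVecLin := by
    rw [← LinearMap.ker_eq_bot, LinearMap.ker_eq_bot']
    exact fun x hAx => by_contra fun hx0 => hx x hx0 hAx
  rw [rank, LinearMap.finrank_range_of_inj hinj, Module.finrank_fintype_fun_eq_card] at h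
  exact h.false

theorem exists_redundant_row_of_det_eq_zero {R : Type*} [CommRing R] [IsDomain R]
    [DecidableEq n] {A : Matrix n n R} (h : A.det = 0) :
    ∃ i₀, ∀ b, (∀ i ≠ i₀, (A *ᵥ b) i = 0) → (A *ᵥ b) i₀ = 0 := by
  obtain ⟨w, hw, hwA⟩ := exists_vecMul_eq_zero_iff.mpr h
  obtain ⟨i₀, hi₀⟩ := Function.ne_iff.mp hw
  refine ⟨i₀, fun b hb => ?_⟩
  have : w i₀ * (A *ᵥ b) i₀ = 0 := calc
    _ = w ⬝ᵥ (A *ᵥ b) := (Fintype.sum_eq_single i₀ fun i hi => by rw [hb i hi, mul_zero]).symm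
    _ = 0 := by rw [dotProduct_mulVec, hwA, zero_dotProduct]
  exact (mul_eq_zero.mp this).resolve_left hi₀

end Matrix

theorem Polynomial.mul_mem_degreeLT_add {R : Type*} [Semiring R] {p q : R[X]} {d μ : ℕ}
    (hp : p.natDegree ≤ d) (hq : q ∈ degreeLT R μ) : p * q ∈ degreeLT R (μ + d) := by
  rcases eq_or_ne p 0 with rfl | hp0
  · simp
  rw [mem_degreeLT] at hq ⊢
  calc (p * q).degree ≤ p.degree + q.degree := degree_mul_le _ _
    _ < d + μ :=
      WithBot.add_lt_add_of_le_of_lt (degree_ne_bot.mpr hp0) (degree_le_of_natDegree_le hp) hq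
    _ = ↑(μ + d) := by rw [add_comm]; norm_cast

section PolyVec

variable {R : Type*} [Semiring R] {n μ : ℕ}

noncomputable def polyVec (x : Fin n × Fin μ → R) : Fin n → R[X] :=
  fun j => (degreeLTEquiv R μ).symm (Function.curry x j)

theorem polyVec_mem_degreeLT (x : Fin n × Fin μ → R) (j : Fin n) :
    polyVec x j ∈ degreeLT R μ :=
  ((degreeLTEquiv R μ).symm (Function.curry x j)).2

theorem polyVec_ne_zero {x : Fin n × Fin μ → R} (hx : x ≠ 0) : polyVec x ≠ 0 := by
  contrapose! hx
  ext ⟨j, q⟩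
  have : (degreeLTEquiv R μ).symm (Function.curry x j) = 0 := Subtype.ext (congrFun hx j)
  exact congrFun ((degreeLTEquiv R μ).symm.map_eq_zero_iff.mp this) q

theorem mulVec_polyVec_mem_degreeLT {d : ℕ} {A : Matrix (Fin n) (Fin n) R[X]}
    (hA : ∀ i j, (A i j).natDegree ≤ d) (x : Fin n × Fin μ → R) (i : Fin n) :
    (A *ᵥ polyVec x) i ∈ degreeLT R (μ + d) :=
  Submodule.sum_mem _ (t := Finset.univ) fun j _ =>
    mul_mem_degreeLT_add (hA i j) (polyVec_mem_degreeLT x j)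

end PolyVec

section Embedding

variable {n d μ : ℕ}

theorem phi_apply_eq_coeff_mul_X_pow (a : ℝ[X]) (i : Fin (μ + d)) (j : Fin μ) :
    phi d μ a i j = (a * X ^ (j : ℕ)).coeff i := by
  rw [coeff_mul_X_pow']
  rfl

theorem phi_mulVec_apply (a : ℝ[X]) (x : Fin μ → ℝ) (i : Fin (μ + d)) :
    (phi d μ a *ᵥ x) i = (a * ((degreeLTEquiv ℝ μ).symm x : ℝ[X])).coeff i := by
  simp only [degreeLTEquiv, LinearEquiv.coe_symm_mk, Finset.mul_sum, finsetSum_coeff,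
    mulVec, dotProduct, phi_apply_eq_coeff_mul_X_pow, ← C_mul_X_pow_eq_monomial]
  refine Finset.sum_congr rfl fun j _ => ?_
  rw [mul_left_comm, coeff_C_mul, mul_comm]

theorem embedMat_mulVec_apply (A : Matrix (Fin n) (Fin n) ℝ[X])
    (x : Fin n × Fin (n * d + 1) → ℝ) (i : Fin n) (s : Fin (n * d + 1 + d)) :
    (embedMat n d A *ᵥ x) (i, s) = ((A *ᵥ polyVec x) i).coeff s := by
  simp only [mulVec, dotProduct, Fintype.sum_prod_type, finsetSum_coeff]
  exact Finset.sum_congr rfl fun j _ => phi_mulVec_apply (A i j) (Function.curry x j) s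

theorem embedMat_mulVec_block_eq_zero_iff {A : Matrix (Fin n) (Fin n) ℝ[X]}
    (hA : ∀ i j, (A i j).natDegree ≤ d) (x : Fin n × Fin (n * d + 1) → ℝ) (i : Fin n) :
    (∀ s, (embedMat n d A *ᵥ x) (i, s) = 0) ↔ (A *ᵥ polyVec x) i = 0 := by
  rw [← degreeLTEquiv_eq_zero_iff_eq_zero (mulVec_polyVec_mem_degreeLT hA x i), funext_iff]
  simp [embedMat_mulVec_apply, degreeLTEquiv]

theorem embedMat_mulVec_eq_zero_iff {A : Matrix (Fin n) (Fin n) ℝ[X]}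
    (hA : ∀ i j, (A i j).natDegree ≤ d) (x : Fin n × Fin (n * d + 1) → ℝ) :
    embedMat n d A *ᵥ x = 0 ↔ A *ᵥ polyVec x = 0 := by
  simp only [funext_iff, Prod.forall, Pi.zero_apply, embedMat_mulVec_block_eq_zero_iff hA]

end Embedding

theorem rank_embedMat_lt_of_det_eq_zero {n d : ℕ} {A : Matrix (Fin n) (Fin n) ℝ[X]}
    (hA : ∀ i j, (A i j).natDegree ≤ d) (hdet : A.det = 0) :
    (embedMat n d A).rank < n * (n * d + 1) := by
  obtain ⟨i₀, hi₀⟩ := exists_redundant_row_of_det_eq_zero hdet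
  set Â' := (embedMat n d A).submatrix
    (fun p : {i // i ≠ i₀} × Fin (n * d + 1 + d) => (p.1.1, p.2)) id
  have hker : ∀ x, embedMat n d A *ᵥ x = 0 ↔ Â' *ᵥ x = 0 := by
    intro x
    have hÂ' : Â' *ᵥ x = 0 ↔ ∀ i ≠ i₀, (A *ᵥ polyVec x) i = 0 := by
      simp only [funext_iff, Prod.forall, Subtype.forall, Pi.zero_apply,
        ← embedMat_mulVec_block_eq_zero_iff hA]
      rfl
    rw [embedMat_mulVec_eq_zero_iff hA, hÂ']
    exact ⟨fun h i _ => congrFun h i, fun h => funext fun i =>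
      if hi : i = i₀ then hi ▸ hi₀ _ h else h i hi⟩
  obtain ⟨m, rfl⟩ : ∃ m, n = m + 1 := Nat.exists_eq_add_one.mpr i₀.pos
  calc (embedMat (m + 1) d A).rank = Â'.rank := rank_eq_rank_of_mulVec_eq_zero_iff hker
    _ ≤ Fintype.card ({i // i ≠ i₀} × Fin ((m + 1) * d + 1 + d)) := rank_le_card_height _
    _ = m * ((m + 1) * d + 1 + d) := by simp
    _ < (m + 1) * ((m + 1) * d + 1) := by nlinarith

theorem det_eq_zero_of_rank_embedMat_lt {n d : ℕ} {A : Matrix (Fin n) (Fin n) ℝ[X]}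
    (hA : ∀ i j, (A i j).natDegree ≤ d) (hrank : (embedMat n d A).rank < n * (n * d + 1)) :
    A.det = 0 := by
  obtain ⟨x, hx, hAx⟩ := exists_mulVec_eq_zero_of_rank_lt (A := embedMat n d A) (by simpa)
  exact exists_mulVec_eq_zero_iff.mp
    ⟨polyVec x, polyVec_ne_zero hx, (embedMat_mulVec_eq_zero_iff hA x).mp hAx⟩

/-- A matrix polynomial `A ∈ ℝ[t]^{n×n}` of degree at most `d` is
singular (`det A` is the zero polynomial) if and only if its ℝ-embedding
`Â ∈ ℝ^{n(μ+d) × nμ}` (with `μ = nd+1`) does not have full column rank, i.e.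
`rank Â < nμ`. -/
theorem det_eq_zero_iff_embed_rank_lt
    (n d : ℕ) (A : Matrix (Fin n) (Fin n) (Polynomial ℝ))
    (hA : ∀ i j, (A i j).natDegree ≤ d) :
    A.det = 0 ↔ (embedMat n d A).rank < n * (n * d + 1) :=
  ⟨rank_embedMat_lt_of_det_eq_zero hA, det_eq_zero_of_rank_embedMat_lt hA⟩
end

section
/- Let A ∈ ℝ[t]^{n×n} be a matrix polynomial of degree at most d and let r be an integer with 1 ≤ r ≤ n. Call ΔA ∈ ℝ[t]^{n×n} feasible if deg(ΔA_{ij}) ≤ deg(A_{ij}) for all 1 ≤ i, j ≤ n and the rank of A + ΔA over ℝ(t) is at most n−r. Then the set of feasible perturbations is nonempty (ΔA = −A is feasible) and there exists a feasible ΔA* of minimal Frobenius norm, i.e., ‖ΔA*‖_F ≤ ‖ΔA‖_F for every feasible ΔA: the infimum of ‖ΔA‖_F over feasible ΔA is attained. -/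
/-!
Matrix polynomials with entries of degree at most `d` are parametrised by their coefficient
vectors in a Euclidean space, where the Frobenius norm becomes the Euclidean norm. Every feasible
perturbation lies in this space, since its entries have degree at most those of `A`. There the
degree constraints are coordinate conditions, and the rank condition over `ℝ(t)` says that all
`(n - r + 1)`-minors vanish identically, i.e. that every evaluation at a point `t ∈ ℝ` has rank at
most `n - r`; both are closed conditions. A nonempty closed set in a finite-dimensional space has
a point of minimal norm.
-/

open Polynomial

/-- The rank of a matrix polynomial over the rational function field `ℝ(t)`. -/
noncomputable def matPolyRank (n : ℕ) (A : Matrix (Fin n) (Fin n) (Polynomial ℝ)) : ℕ :=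
  (A.map (algebraMap (Polynomial ℝ) (RatFunc ℝ))).rank

/-- The Frobenius norm `‖A‖_F` of a matrix polynomial, the square root of the sum of
the squares of all scalar coefficients of all entries. -/
noncomputable def matPolyFrobNorm (n : ℕ) (A : Matrix (Fin n) (Fin n) (Polynomial ℝ)) : ℝ :=
  Real.sqrt (∑ i, ∑ j, ∑ k ∈ (A i j).support, ((A i j).coeff k) ^ 2)

/-- A perturbation `ΔA` is feasible for `A` and target kernel dimension `r` if each
entry of `ΔA` has degree at most the degree of the corresponding entry of `A`
(the zero polynomial having degree `⊥`, so zero entries of `A` may not be perturbed)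
and the rank of `A + ΔA` over `ℝ(t)` is at most `n − r`. -/
def Feasible (n r : ℕ) (A ΔA : Matrix (Fin n) (Fin n) (Polynomial ℝ)) : Prop :=
  (∀ i j, (ΔA i j).degree ≤ (A i j).degree) ∧
    matPolyRank n (A + ΔA) ≤ n - r

open Matrix

section LinearIndependent

variable {K V ι : Type*} [Field K] [AddCommGroup V] [Module K V] [Finite ι]

theorem exists_linearIndependent_comp_of_le_finrank_span {s : ℕ} (v : ι → V)
    (h : s ≤ Module.finrank K (Submodule.span K (Set.range v))) :
    ∃ f : Fin s → ι, LinearIndependent K (v ∘ f) := by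
  obtain ⟨κ, a, ha, hspan, hli⟩ := exists_linearIndependent' K v
  have : Finite κ := Finite.of_injective a ha
  have := Fintype.ofFinite κ
  rw [← hspan, finrank_span_eq_card hli] at h
  obtain ⟨e⟩ : Nonempty (Fin s ↪ κ) := Function.Embedding.nonempty_of_card_le (by simpa using h)
  exact ⟨a ∘ e, hli.comp e e.injective⟩

end LinearIndependent

namespace Matrix

variable {K m n : Type*}

theorem det_submatrix_map {R S : Type*} [CommRing R] [CommRing S] (f : R →+* S)
    (M : Matrix m n R) {s : ℕ} (r : Fin s → m) (c : Fin s → n) :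
    ((M.map f).submatrix r c).det = f (M.submatrix r c).det := by
  rw [submatrix_map, RingHom.map_det, RingHom.mapMatrix_apply]

variable [Field K] [Fintype n] {s : ℕ}

theorem le_rank_of_det_submatrix_ne_zero (M : Matrix m n K) (r : Fin s → m) (c : Fin s → n)
    (h : (M.submatrix r c).det ≠ 0) : s ≤ M.rank := by
  classical
  simpa [rank_of_det_ne_zero h] using M.rank_submatrix_le r c

variable [Fintype m]

theorem exists_linearIndependent_rows_submatrix_of_le_rank (M : Matrix m n K)
    (h : s ≤ M.rank) : ∃ r : Fin s → m, LinearIndependent K (M.submatrix r id).row := by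
  rw [rank_eq_finrank_span_row] at h
  exact exists_linearIndependent_comp_of_le_finrank_span M.row h

theorem exists_det_submatrix_ne_zero_of_le_rank (M : Matrix m n K) (h : s ≤ M.rank) :
    ∃ (r : Fin s → m) (c : Fin s → n), (M.submatrix r c).det ≠ 0 := by
  obtain ⟨r, hr⟩ := M.exists_linearIndependent_rows_submatrix_of_le_rank h
  have hN : s ≤ (M.submatrix r id)ᵀ.rank := by
    rw [rank_transpose, hr.rank_matrix, Fintype.card_fin]
  obtain ⟨c, hc⟩ := (M.submatrix r id)ᵀ.exists_linearIndependent_rows_submatrix_of_le_rank hN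
  have hunit : IsUnit (M.submatrix r c)ᵀ.det :=
    (isUnit_iff_isUnit_det _).mp (linearIndependent_rows_iff_isUnit.mp hc)
  exact ⟨r, c, by simpa only [det_transpose] using hunit.ne_zero⟩

theorem rank_le_iff_forall_det_submatrix_eq_zero (M : Matrix m n K) (k : ℕ) :
    M.rank ≤ k ↔ ∀ (r : Fin (k + 1) → m) (c : Fin (k + 1) → n), (M.submatrix r c).det = 0 := by
  refine ⟨fun h r c => ?_, fun h => ?_⟩
  · by_contra h0
    exact (M.le_rank_of_det_submatrix_ne_zero r c h0).not_gt (Nat.lt_succ_of_le h)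
  · by_contra! hk
    obtain ⟨r, c, h0⟩ := M.exists_det_submatrix_ne_zero_of_le_rank hk
    exact h0 (h r c)

theorem rank_map_le_iff_of_injective {R : Type*} [CommRing R] {f : R →+* K}
    (hf : Function.Injective f) (M : Matrix m n R) (k : ℕ) :
    (M.map f).rank ≤ k ↔ ∀ (r : Fin (k + 1) → m) (c : Fin (k + 1) → n),
      (M.submatrix r c).det = 0 := by
  simp only [rank_le_iff_forall_det_submatrix_eq_zero, det_submatrix_map,
    map_eq_zero_iff f hf]

theorem rank_map_ratFunc_le_iff_forall_eval [Infinite K] (M : Matrix m n K[X]) (k : ℕ) :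
    (M.map (algebraMap K[X] (RatFunc K))).rank ≤ k ↔ ∀ t : K, (M.map (eval t)).rank ≤ k := by
  simp only [rank_map_le_iff_of_injective (RatFunc.algebraMap_injective K),
    rank_le_iff_forall_det_submatrix_eq_zero, ← coe_evalRingHom, det_submatrix_map]
  exact ⟨fun h t r c => by simp [h r c],
    fun h r c => Polynomial.funext fun t => by simpa using h t r c⟩

theorem isClosed_setOf_rank_le [TopologicalSpace K] [IsTopologicalRing K] [T1Space K] (k : ℕ) :
    IsClosed {M : Matrix m n K | M.rank ≤ k} := by
  simp only [rank_le_iff_forall_det_submatrix_eq_zero, Set.ofPred_forall]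
  exact isClosed_iInter fun r => isClosed_iInter fun c =>
    isClosed_singleton.preimage (continuous_id.matrix_submatrix r c).matrix_det

end Matrix

theorem IsClosed.exists_isMinOn_norm {E : Type*} [NormedAddCommGroup E] [ProperSpace E]
    {s : Set E} (hs : IsClosed s) (hne : s.Nonempty) : ∃ x ∈ s, IsMinOn norm s x := by
  obtain ⟨x, hx, hdist⟩ := hs.exists_infDist_eq_dist hne 0
  refine ⟨x, hx, isMinOn_iff.mpr fun y hy => ?_⟩
  simpa only [← dist_zero_left, ← hdist] using Metric.infDist_le_dist_of_mem hy

theorem Polynomial.sum_ofFn {R S : Type*} [Semiring R] [DecidableEq R] [AddCommMonoid S]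
    {N : ℕ} (v : Fin N → R) {f : ℕ → R → S} (hf : ∀ k, f k 0 = 0) :
    (ofFn N v).sum f = ∑ k : Fin N, f k (v k) := by
  rcases N with _ | N
  · simp [ofFn_zero', sum_zero_index]
  · rw [sum_over_range' _ hf _ (ofFn_natDegree_lt N.succ_pos v), ← Fin.sum_univ_eq_sum_range]
    exact Finset.sum_congr rfl fun k _ => by rw [ofFn_coeff_eq_val_of_lt _ k.isLt]

/-- The coordinate `(i, j, k)` is the coefficient of `t ^ k` in the entry `(i, j)`. -/
abbrev MatPolyCoeffs (n d : ℕ) := EuclideanSpace ℝ (Fin n × Fin n × Fin (d + 1))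

namespace MatPolyCoeffs

variable {n d : ℕ}

noncomputable def toMatPoly (c : MatPolyCoeffs n d) : Matrix (Fin n) (Fin n) ℝ[X] :=
  of fun i j => ofFn (d + 1) fun k => c (i, j, k)

noncomputable def ofMatPoly (d : ℕ) (A : Matrix (Fin n) (Fin n) ℝ[X]) : MatPolyCoeffs n d :=
  WithLp.toLp 2 fun x => (A x.1 x.2.1).coeff x.2.2

theorem coeff_toMatPoly (c : MatPolyCoeffs n d) (i j : Fin n) (k : ℕ) :
    (toMatPoly c i j).coeff k = if h : k < d + 1 then c (i, j, ⟨k, h⟩) else 0 := by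
  split_ifs with h
  · exact ofFn_coeff_eq_val_of_lt _ h
  · exact ofFn_coeff_eq_zero_of_ge _ (not_lt.mp h)

theorem toMatPoly_ofMatPoly {A : Matrix (Fin n) (Fin n) ℝ[X]}
    (hA : ∀ i j, (A i j).natDegree ≤ d) :
    toMatPoly (ofMatPoly d A) = A := by
  ext i j k
  rw [coeff_toMatPoly]
  split_ifs with h
  · rfl
  · exact (coeff_eq_zero_of_natDegree_lt ((hA i j).trans_lt (not_lt.mp h))).symm

theorem matPolyFrobNorm_toMatPoly (c : MatPolyCoeffs n d) :
    matPolyFrobNorm n (toMatPoly c) = ‖c‖ := by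
  have hentry (i j : Fin n) : ∑ k ∈ (toMatPoly c i j).support, (toMatPoly c i j).coeff k ^ 2 =
      ∑ k : Fin (d + 1), c (i, j, k) ^ 2 :=
    Polynomial.sum_ofFn (f := fun _ a => a ^ 2) _ fun _ => zero_pow two_ne_zero
  simp only [matPolyFrobNorm, hentry, EuclideanSpace.norm_eq, Real.norm_eq_abs, sq_abs,
    Fintype.sum_prod_type]

theorem continuous_coeff_toMatPoly (i j : Fin n) (k : ℕ) :
    Continuous fun c : MatPolyCoeffs n d => (toMatPoly c i j).coeff k := by
  simp only [coeff_toMatPoly]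
  split_ifs
  · exact PiLp.continuous_apply _ _ _
  · exact continuous_const

theorem continuous_eval_toMatPoly (t : ℝ) (i j : Fin n) :
    Continuous fun c : MatPolyCoeffs n d => (toMatPoly c i j).eval t := by
  have heval (c : MatPolyCoeffs n d) : (toMatPoly c i j).eval t =
      ∑ k ∈ Finset.range (d + 1), (toMatPoly c i j).coeff k * t ^ k :=
    eval_eq_sum_range' (ofFn_natDegree_lt d.succ_pos _) t
  simp only [heval]
  exact continuous_finsetSum _ fun k _ => (continuous_coeff_toMatPoly i j k).mul continuous_const

variable (A : Matrix (Fin n) (Fin n) ℝ[X])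

theorem isClosed_setOf_degree_toMatPoly_le :
    IsClosed {c : MatPolyCoeffs n d | ∀ i j, (toMatPoly c i j).degree ≤ (A i j).degree} := by
  simp only [degree_le_iff_coeff_zero, Set.ofPred_forall]
  exact isClosed_iInter fun i => isClosed_iInter fun j => isClosed_iInter fun k =>
    isClosed_iInter fun _ => isClosed_eq (continuous_coeff_toMatPoly i j k) continuous_const

theorem isClosed_setOf_matPolyRank_add_toMatPoly_le (k : ℕ) :
    IsClosed {c : MatPolyCoeffs n d | matPolyRank n (A + toMatPoly c) ≤ k} := by
  simp only [matPolyRank, rank_map_ratFunc_le_iff_forall_eval, Set.ofPred_forall]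
  refine isClosed_iInter fun t => (isClosed_setOf_rank_le k).preimage ?_
  refine continuous_matrix fun i j => ?_
  simp only [map_apply, Matrix.add_apply, eval_add]
  exact continuous_const.add (continuous_eval_toMatPoly t i j)

theorem isClosed_setOf_feasible_toMatPoly (r : ℕ) :
    IsClosed {c : MatPolyCoeffs n d | Feasible n r A (toMatPoly c)} :=
  (isClosed_setOf_degree_toMatPoly_le A).inter (isClosed_setOf_matPolyRank_add_toMatPoly_le A _)

end MatPolyCoeffs

theorem feasible_neg_self {n : ℕ} (r : ℕ) (A : Matrix (Fin n) (Fin n) ℝ[X]) :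
    Feasible n r A (-A) := by
  refine ⟨fun i j => (degree_neg (A i j)).le, ?_⟩
  simp [matPolyRank]

open MatPolyCoeffs

theorem exists_minimal_feasible_perturbation_general
    (n d r : ℕ)
    (A : Matrix (Fin n) (Fin n) (Polynomial ℝ))
    (hA : ∀ i j, (A i j).natDegree ≤ d) :
    Feasible n r A (-A) ∧
    ∃ ΔAstar : Matrix (Fin n) (Fin n) (Polynomial ℝ),
      Feasible n r A ΔAstar ∧
      ∀ ΔA : Matrix (Fin n) (Fin n) (Polynomial ℝ),
        Feasible n r A ΔA → matPolyFrobNorm n ΔAstar ≤ matPolyFrobNorm n ΔA := by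
  have toMatPoly_ofMatPoly_of_feasible {ΔA} (h : Feasible n r A ΔA) :
      toMatPoly (ofMatPoly d ΔA) = ΔA :=
    toMatPoly_ofMatPoly fun i j =>
      natDegree_le_of_degree_le ((h.1 i j).trans (degree_le_of_natDegree_le (hA i j)))
  have mem_of_feasible {ΔA} (h : Feasible n r A ΔA) :
      ofMatPoly d ΔA ∈ {c | Feasible n r A (toMatPoly c)} := by
    rwa [Set.mem_ofPred_eq, toMatPoly_ofMatPoly_of_feasible h]
  obtain ⟨c, hc, hmin⟩ := (isClosed_setOf_feasible_toMatPoly A r).exists_isMinOn_norm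
    ⟨_, mem_of_feasible (feasible_neg_self r A)⟩
  refine ⟨feasible_neg_self r A, toMatPoly c, hc, fun ΔA hΔA => ?_⟩
  rw [← toMatPoly_ofMatPoly_of_feasible hΔA, matPolyFrobNorm_toMatPoly,
    matPolyFrobNorm_toMatPoly]
  exact isMinOn_iff.mp hmin _ (mem_of_feasible hΔA)

/-- For any matrix polynomial `A ∈ ℝ[t]^{n×n}` of degree at most `d`
and integer `1 ≤ r ≤ n`, the set of feasible perturbations is nonempty (`ΔA = −A` is
feasible) and the infimum of `‖ΔA‖_F` over feasible perturbations is attained: there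
is a feasible `ΔA*` with `‖ΔA*‖_F ≤ ‖ΔA‖_F` for every feasible `ΔA`. -/
theorem exists_minimal_feasible_perturbation
    (n d r : ℕ) (hr1 : 1 ≤ r) (hrn : r ≤ n)
    (A : Matrix (Fin n) (Fin n) (Polynomial ℝ))
    (hA : ∀ i j, (A i j).natDegree ≤ d) :
    Feasible n r A (-A) ∧
    ∃ ΔAstar : Matrix (Fin n) (Fin n) (Polynomial ℝ),
      Feasible n r A ΔAstar ∧
      ∀ ΔA : Matrix (Fin n) (Fin n) (Polynomial ℝ),
        Feasible n r A ΔA → matPolyFrobNorm n ΔAstar ≤ matPolyFrobNorm n ΔA :=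
  exists_minimal_feasible_perturbation_general n d r A hA
end
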